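/- Let a ∈ ℝ and 0 ≤ R ≤ 1 with α := a + R > 0, and let K_{a,R} = h + conj(g) be the generalized harmonic Koebe function. Then for every r ∈ [0, 1), |K_{a,R}(r)| = (1/(2α))·[((1+r)/(1−r))^α − 1]; that is, K_{a,R} attains equality in the growth upper bound for affine and linear invariant families of order α along the positive real axis. -/

import Mathlib

/-!
On the real diameter the lens map is real: with `W = ((1 + t) / (1 - t)) ^ R > 0` one has
`l_R(t) = (W - 1) / (W + 1)`, so the dilatation relation `g' = l_R h'` inverts to
`h' + g' = W (h' - g') = W k_a' = k_{a+R}'`. Hence `h + g = k_{a+R}` on `(-1, 1)`, so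
`g = (k_{a+R} - k_a) / 2` is real there and `K_{a,R}(r) = h(r) + g(r) = k_{a+R}(r) ≥ 0`.
-/

open Complex Set

noncomputable section

/-- The open unit disk in the complex plane. -/
def unitDisk : Set ℂ := {z : ℂ | ‖z‖ < 1}

/-- The generalized Koebe function `k_a`, using the principal branch of the logarithm
(via the complex power function). -/
def koebeFn (a : ℂ) (z : ℂ) : ℂ :=
  if a = 0 then (1 / 2) * Complex.log ((1 + z) / (1 - z))
  else (1 / (2 * a)) * (((1 + z) / (1 - z)) ^ a - 1)

/-- The lens map `l_R` (with principal-branch powers); note that this formula also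
gives `l_0 ≡ 0` and `l_1 = id` on the unit disk. -/
def lensMap (R : ℝ) (z : ℂ) : ℂ :=
  (((1 + z) / (1 - z)) ^ (R : ℂ) - 1) / (((1 + z) / (1 - z)) ^ (R : ℂ) + 1)

/-- The `n`-th Taylor coefficient of `f` at `0`. -/
def coeffAt (f : ℂ → ℂ) (n : ℕ) : ℂ := iteratedDeriv n f 0 / n.factorial

open Topology

lemma isOpen_unitDisk : IsOpen unitDisk := isOpen_lt continuous_norm continuous_const

lemma ofReal_mem_unitDisk {t : ℝ} (ht : t ∈ Ioo (-1 : ℝ) 1) : (t : ℂ) ∈ unitDisk := by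
  simpa [unitDisk, abs_lt] using ht

lemma cayley_pos {t : ℝ} (ht : t ∈ Ioo (-1 : ℝ) 1) : 0 < (1 + t) / (1 - t) :=
  div_pos (by linarith [ht.1]) (by linarith [ht.2])

lemma one_le_cayley {t : ℝ} (h0 : 0 ≤ t) (h1 : t < 1) : 1 ≤ (1 + t) / (1 - t) := by
  rw [le_div_iff₀ (by linarith)]
  linarith

lemma ofReal_cayley (t : ℝ) : (((1 + t) / (1 - t) : ℝ) : ℂ) = (1 + t) / (1 - t) := by
  push_cast
  ring

lemma cayley_ofReal_mem_slitPlane {t : ℝ} (ht : t ∈ Ioo (-1 : ℝ) 1) :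
    (1 + (t : ℂ)) / (1 - t) ∈ slitPlane := by
  rw [← ofReal_cayley]
  exact ofReal_mem_slitPlane.2 (cayley_pos ht)

lemma hasDerivAt_cayley {z : ℂ} (hz : z ≠ 1) :
    HasDerivAt (fun z : ℂ => (1 + z) / (1 - z)) (2 / (1 - z) ^ 2) z := by
  have hz' : 1 - z ≠ 0 := sub_ne_zero.2 hz.symm
  refine (((hasDerivAt_id' z).const_add 1).div ((hasDerivAt_id' z).const_sub 1) hz').congr_deriv ?_
  field_simp
  ring

lemma hasDerivAt_koebeFn (c : ℂ) {z : ℂ} (hz : z ≠ 1) (hw : (1 + z) / (1 - z) ∈ slitPlane) :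
    HasDerivAt (koebeFn c) (((1 + z) / (1 - z)) ^ (c - 1) / (1 - z) ^ 2) z := by
  have hz' : 1 - z ≠ 0 := sub_ne_zero.2 hz.symm
  have hw0 : (1 + z) / (1 - z) ≠ 0 := slitPlane_ne_zero hw
  by_cases hc : c = 0
  · subst hc
    have hk : koebeFn 0 = fun z : ℂ => 1 / 2 * log ((1 + z) / (1 - z)) := by
      funext z; simp [koebeFn]
    rw [hk, zero_sub, cpow_neg_one]
    refine (((hasDerivAt_cayley hz).clog hw).const_mul (1 / 2 : ℂ)).congr_deriv ?_
    field_simp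
  · have hk : koebeFn c = fun z : ℂ => 1 / (2 * c) * (((1 + z) / (1 - z)) ^ c - 1) := by
      funext z; simp [koebeFn, hc]
    rw [hk]
    refine ((((hasDerivAt_cayley hz).cpow_const hw).sub_const 1).const_mul
      (1 / (2 * c))).congr_deriv ?_
    field_simp

lemma koebeFn_ofReal {c : ℝ} (hc : c ≠ 0) {t : ℝ} (ht : t ∈ Ioo (-1 : ℝ) 1) :
    koebeFn c t = ((1 / (2 * c) * (((1 + t) / (1 - t)) ^ c - 1) : ℝ) : ℂ) := by
  rw [koebeFn, if_neg (ofReal_ne_zero.2 hc), ← ofReal_cayley, ← ofReal_cpow (cayley_pos ht).le]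
  push_cast
  ring

lemma conj_koebeFn_ofReal (c : ℝ) {t : ℝ} (ht : t ∈ Ioo (-1 : ℝ) 1) :
    starRingEnd ℂ (koebeFn c t) = koebeFn c t := by
  rcases eq_or_ne c 0 with rfl | hc
  · rw [conj_eq_iff_im, ofReal_zero, koebeFn, if_pos rfl, ← ofReal_cayley,
      ← ofReal_log (cayley_pos ht).le]
    simp
  · rw [koebeFn_ofReal hc ht, conj_ofReal]

lemma add_eq_mul_sub_of_eq_div_mul {K : Type*} [Field K] {W x y : K} (hW : W + 1 ≠ 0)
    (hy : y = (W - 1) / (W + 1) * x) : x + y = W * (x - y) := by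
  rw [hy]
  field_simp
  ring

lemma add_eq_cpow_mul_sub_of_eq_lensMap_mul (R : ℝ) {t : ℝ} (ht : t ∈ Ioo (-1 : ℝ) 1) {x y : ℂ}
    (hy : y = lensMap R t * x) : x + y = ((1 + t) / (1 - t)) ^ (R : ℂ) * (x - y) := by
  have hW : (((1 + t) / (1 - t)) ^ (R : ℂ) : ℂ) = (((1 + t) / (1 - t)) ^ R : ℝ) := by
    rw [← ofReal_cayley, ofReal_cpow (cayley_pos ht).le]
  refine add_eq_mul_sub_of_eq_div_mul ?_ hy
  rw [hW]
  exact_mod_cast (add_pos (Real.rpow_pos_of_pos (cayley_pos ht) R) one_pos).ne'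

lemma deriv_add_of_shear (a R : ℝ) {h g : ℂ → ℂ}
    (hh : DifferentiableOn ℂ h unitDisk) (hg : DifferentiableOn ℂ g unitDisk)
    (hshear : ∀ z ∈ unitDisk, h z - g z = koebeFn (a : ℂ) z)
    (hdil : ∀ z ∈ unitDisk, deriv g z = lensMap R z * deriv h z)
    {t : ℝ} (ht : t ∈ Ioo (-1 : ℝ) 1) :
    deriv h t + deriv g t = ((1 + t) / (1 - t)) ^ (((a + R : ℝ) : ℂ) - 1) / (1 - t) ^ 2 := by
  have hdisk : unitDisk ∈ 𝓝 (t : ℂ) := isOpen_unitDisk.mem_nhds (ofReal_mem_unitDisk ht)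
  have ht1 : (t : ℂ) ≠ 1 := by exact_mod_cast ht.2.ne
  have hw := cayley_ofReal_mem_slitPlane ht
  have hsub : deriv h t - deriv g t = ((1 + t) / (1 - t)) ^ ((a : ℂ) - 1) / (1 - t) ^ 2 := by
    rw [← deriv_fun_sub (hh.differentiableAt hdisk) (hg.differentiableAt hdisk),
      (Filter.eventuallyEq_of_mem hdisk hshear).deriv_eq]
    exact (hasDerivAt_koebeFn _ ht1 hw).deriv
  rw [add_eq_cpow_mul_sub_of_eq_lensMap_mul R ht (hdil _ (ofReal_mem_unitDisk ht)), hsub,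
    mul_div_assoc', ← cpow_add _ _ (slitPlane_ne_zero hw)]
  push_cast
  ring_nf

lemma koebeFn_zero (c : ℂ) : koebeFn c 0 = 0 := by
  simp [koebeFn]

lemma add_eq_koebeFn_of_shear (a R : ℝ) {h g : ℂ → ℂ}
    (hh : DifferentiableOn ℂ h unitDisk) (hg : DifferentiableOn ℂ g unitDisk)
    (h0 : h 0 = 0) (g0 : g 0 = 0)
    (hshear : ∀ z ∈ unitDisk, h z - g z = koebeFn (a : ℂ) z)
    (hdil : ∀ z ∈ unitDisk, deriv g z = lensMap R z * deriv h z)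
    {t : ℝ} (ht : t ∈ Ioo (-1 : ℝ) 1) :
    h t + g t = koebeFn ((a + R : ℝ) : ℂ) t := by
  have hsum : ∀ s ∈ Ioo (-1 : ℝ) 1, HasDerivAt (fun s : ℝ => h s + g s)
      (((1 + s) / (1 - s)) ^ (((a + R : ℝ) : ℂ) - 1) / (1 - s) ^ 2) s := fun s hs => by
    have hdisk : unitDisk ∈ 𝓝 (s : ℂ) := isOpen_unitDisk.mem_nhds (ofReal_mem_unitDisk hs)
    rw [← deriv_add_of_shear a R hh hg hshear hdil hs]
    exact ((hh.differentiableAt hdisk).hasDerivAt.add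
      (hg.differentiableAt hdisk).hasDerivAt).comp_ofReal
  have hkoebe : ∀ s ∈ Ioo (-1 : ℝ) 1, HasDerivAt (fun s : ℝ => koebeFn ((a + R : ℝ) : ℂ) s)
      (((1 + s) / (1 - s)) ^ (((a + R : ℝ) : ℂ) - 1) / (1 - s) ^ 2) s := fun s hs =>
    (hasDerivAt_koebeFn _ (by exact_mod_cast hs.2.ne) (cayley_ofReal_mem_slitPlane hs)).comp_ofReal
  refine isOpen_Ioo.eqOn_of_deriv_eq isPreconnected_Ioo
    (fun s hs => (hsum s hs).differentiableAt.differentiableWithinAt)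
    (fun s hs => (hkoebe s hs).differentiableAt.differentiableWithinAt)
    (fun s hs => (hsum s hs).deriv.trans (hkoebe s hs).deriv.symm)
    (x := 0) ⟨by norm_num, by norm_num⟩ ?_ ht
  simp [h0, g0, koebeFn_zero]

theorem generalized_harmonic_koebe_growth_equality_general
    (a R : ℝ) (hα : 0 < a + R)
    (h g : ℂ → ℂ)
    (hh : DifferentiableOn ℂ h unitDisk) (hg : DifferentiableOn ℂ g unitDisk)
    (h0 : h 0 = 0) (g0 : g 0 = 0)
    (hshear : ∀ z ∈ unitDisk, h z - g z = koebeFn (a : ℂ) z)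
    (hdil : ∀ z ∈ unitDisk, deriv g z = lensMap R z * deriv h z) :
    ∀ r : ℝ, 0 ≤ r → r < 1 →
      ‖h (r : ℂ) + (starRingEnd ℂ) (g (r : ℂ))‖
        = (1 / (2 * (a + R))) * (((1 + r) / (1 - r)) ^ (a + R) - 1) := by
  intro r hr0 hr1
  have hr : r ∈ Ioo (-1 : ℝ) 1 := ⟨by linarith, hr1⟩
  have hsum := add_eq_koebeFn_of_shear a R hh hg h0 g0 hshear hdil hr
  have hg_real : starRingEnd ℂ (g r) = g r := by
    have hgr : g r = (koebeFn ((a + R : ℝ) : ℂ) r - koebeFn (a : ℂ) r) / 2 := by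
      linear_combination (hsum - hshear r (ofReal_mem_unitDisk hr)) / 2
    rw [hgr, map_div₀, map_sub, conj_koebeFn_ofReal _ hr, conj_koebeFn_ofReal _ hr, map_ofNat]
  rw [hg_real, hsum, koebeFn_ofReal hα.ne' hr, norm_real, Real.norm_of_nonneg]
  exact mul_nonneg (by positivity)
    (sub_nonneg.2 (Real.one_le_rpow (one_le_cayley hr0 hr1) hα.le))

/-- For real `a` and `0 ≤ R ≤ 1` with `α := a + R > 0`, the generalized harmonic Koebe
function `K_{a,R} = h + conj g` (defined by `h - g = k_a`, `g' = l_R·h'`,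
`h(0) = g(0) = 0`) attains equality in the growth upper bound along the positive real
axis: `|K_{a,R}(r)| = (1/(2α))·[((1+r)/(1-r))^α - 1]` for `0 ≤ r < 1`. -/
theorem generalized_harmonic_koebe_growth_equality
    (a R : ℝ) (hR0 : 0 ≤ R) (hR1 : R ≤ 1) (hα : 0 < a + R)
    (h g : ℂ → ℂ)
    (hh : DifferentiableOn ℂ h unitDisk) (hg : DifferentiableOn ℂ g unitDisk)
    (h0 : h 0 = 0) (g0 : g 0 = 0)
    (hshear : ∀ z ∈ unitDisk, h z - g z = koebeFn (a : ℂ) z)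
    (hdil : ∀ z ∈ unitDisk, deriv g z = lensMap R z * deriv h z) :
    ∀ r : ℝ, 0 ≤ r → r < 1 →
      ‖h (r : ℂ) + (starRingEnd ℂ) (g (r : ℂ))‖
        = (1 / (2 * (a + R))) * (((1 + r) / (1 - r)) ^ (a + R) - 1) :=
  generalized_harmonic_koebe_growth_equality_general a R hα h g hh hg h0 g0 hshear hdil
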